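/- arXiv:1711.06511 — 3 statements merged into one kernel-verified Lean document; each statement's English description precedes it below -/
import Mathlib

section
/- (Foata–Schützenberger.) For each n ≥ 1 there exist nonnegative integers γ_{n,j}, for 0 ≤ j ≤ ⌊(n−1)/2⌋, such that the Eulerian polynomial A_n(q) = Σ_{π ∈ S_n} q^{des(π)} satisfies A_n(q) = Σ_{j=0}^{⌊(n−1)/2⌋} γ_{n,j} q^j (1+q)^{n−1−2j}. -/
/-!
Inserting the new largest letter into each of the `n + 1` slots of a permutation of `n` letters
with `d` descents keeps `d` descents in the `d + 1` slots inside a descent or at the end, and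
creates one more in the other `n - d` slots. Hence `A_{n+1} = (1 + n q) A_n + q (1 - q) A_n'`.
With `2 j + m = n - 1`, this operator sends `q^j (1+q)^m` to
`(j + 1) q^j (1+q)^(m+1) + 2 m q^(j+1) (1+q)^(m-1)`, a nonnegative combination of the
`q^i (1+q)^(n-2i)`, so gamma-positivity propagates from `A_1 = 1`.
-/

/-- The number of descents of a permutation of `Fin n`. -/
def des {n : ℕ} (π : Equiv.Perm (Fin n)) : ℕ :=
  (Finset.univ.filter (fun p : Fin n × Fin n =>
    (p.2 : ℕ) = (p.1 : ℕ) + 1 ∧ π p.2 < π p.1)).card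

open Polynomial

namespace Polynomial

variable {R : Type*} [CommRing R]

noncomputable def eulerianStep (n : ℕ) : R[X] →ₗ[R] R[X] :=
  LinearMap.mulLeft R (1 + (n : R[X]) * X) + LinearMap.mulLeft R (X * (1 - X)) ∘ₗ derivative

@[simp] lemma eulerianStep_apply (n : ℕ) (f : R[X]) :
    eulerianStep n f = (1 + (n : R[X]) * X) * f + X * (1 - X) * derivative f :=
  rfl

lemma eulerianStep_X_pow_mul_one_add_X_pow (j m : ℕ) :
    eulerianStep (2 * j + m + 1) (X ^ j * (1 + X) ^ m : R[X]) =
      ((j + 1 : ℕ) : R[X]) * (X ^ j * (1 + X) ^ (m + 1)) +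
        ((2 * m : ℕ) : R[X]) * (X ^ (j + 1) * (1 + X) ^ (m - 1)) := by
  rcases j with _ | j <;> rcases m with _ | m <;>
    simp [derivative_mul, derivative_pow] <;> ring

def IsGammaPositive (d : ℕ) (f : R[X]) : Prop :=
  ∃ γ : ℕ → ℕ,
    f = ∑ j ∈ Finset.range (d / 2 + 1), (γ j : R[X]) * X ^ j * (1 + X) ^ (d - 2 * j)

variable {d : ℕ} {f g : R[X]}

lemma isGammaPositive_zero (d : ℕ) : IsGammaPositive d (0 : R[X]) := ⟨0, by simp⟩

lemma IsGammaPositive.add (hf : IsGammaPositive d f) (hg : IsGammaPositive d g) :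
    IsGammaPositive d (f + g) := by
  obtain ⟨γ, rfl⟩ := hf
  obtain ⟨δ, rfl⟩ := hg
  exact ⟨γ + δ, by simp [Finset.sum_add_distrib, add_mul]⟩

lemma IsGammaPositive.natCast_mul (c : ℕ) (hf : IsGammaPositive d f) :
    IsGammaPositive d ((c : R[X]) * f) := by
  obtain ⟨γ, rfl⟩ := hf
  exact ⟨fun j => c * γ j, by simp [Finset.mul_sum, mul_assoc]⟩

lemma isGammaPositive_sum {ι : Type*} {s : Finset ι} {f : ι → R[X]}
    (h : ∀ i ∈ s, IsGammaPositive d (f i)) : IsGammaPositive d (∑ i ∈ s, f i) :=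
  Finset.sum_induction _ _ (fun _ _ => IsGammaPositive.add) (isGammaPositive_zero d) h

lemma isGammaPositive_X_pow_mul_one_add_X_pow {j m : ℕ} (h : 2 * j + m = d) :
    IsGammaPositive d (X ^ j * (1 + X) ^ m : R[X]) := by
  refine ⟨fun i => if i = j then 1 else 0, ?_⟩
  rw [Finset.sum_eq_single_of_mem j (Finset.mem_range.2 (by omega)) fun i _ hij => by simp [hij]]
  simp [← h]

lemma isGammaPositive_eulerianStep_X_pow_mul_one_add_X_pow (j m : ℕ) :
    IsGammaPositive (2 * j + m + 1)
      (eulerianStep (2 * j + m + 1) (X ^ j * (1 + X) ^ m : R[X])) := by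
  rw [eulerianStep_X_pow_mul_one_add_X_pow]
  refine ((isGammaPositive_X_pow_mul_one_add_X_pow (by ring)).natCast_mul _).add ?_
  rcases m with _ | m
  · simpa using isGammaPositive_zero (R := R) _
  · exact (isGammaPositive_X_pow_mul_one_add_X_pow (by omega)).natCast_mul _

lemma IsGammaPositive.eulerianStep (hf : IsGammaPositive d f) :
    IsGammaPositive (d + 1) (eulerianStep (d + 1) f) := by
  obtain ⟨γ, rfl⟩ := hf
  rw [map_sum]
  refine isGammaPositive_sum fun j hj => ?_
  have hj : j ≤ d / 2 := Nat.lt_succ_iff.1 (Finset.mem_range.1 hj)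
  obtain ⟨m, rfl⟩ : ∃ m, d = 2 * j + m := ⟨d - 2 * j, by omega⟩
  rw [mul_assoc, ← nsmul_eq_mul, map_nsmul, nsmul_eq_mul, Nat.add_sub_cancel_left]
  exact (isGammaPositive_eulerianStep_X_pow_mul_one_add_X_pow j m).natCast_mul _

end Polynomial

namespace List

variable {α β : Type*} [LinearOrder α] [LinearOrder β]

def descentCount : List α → ℕ
  | a :: b :: t => (if b < a then 1 else 0) + descentCount (b :: t)
  | _ => 0

@[simp] lemma descentCount_nil : descentCount ([] : List α) = 0 := rfl

@[simp] lemma descentCount_singleton (a : α) : descentCount [a] = 0 := rfl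

@[simp] lemma descentCount_cons_cons (a b : α) (t : List α) :
    descentCount (a :: b :: t) = (if b < a then 1 else 0) + descentCount (b :: t) :=
  rfl

lemma descentCount_map_of_strictMono {f : α → β} (hf : StrictMono f) :
    ∀ w : List α, descentCount (w.map f) = descentCount w
  | [] | [_] => rfl
  | a :: b :: t => by
    have ih := descentCount_map_of_strictMono hf (b :: t)
    simp only [map_cons] at ih ⊢
    simp only [descentCount_cons_cons, hf.lt_iff_lt, ih]

lemma descentCount_ofFn : ∀ {n : ℕ} (f : Fin n → α),
    descentCount (ofFn f) =
      (Finset.univ.filter fun p : Fin n × Fin n => (p.2 : ℕ) = p.1 + 1 ∧ f p.2 < f p.1).card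
  | 0, _ => rfl
  | 1, _ => by simp
  | n + 2, f => by
    have ih := descentCount_ofFn fun i => f i.succ
    rw [ofFn_succ] at ih
    rw [ofFn_succ, ofFn_succ (f := fun i => f i.succ), descentCount_cons_cons, ih,
      Finset.card_filter, Finset.card_filter]
    simp [Fintype.sum_prod_type, Fin.sum_univ_succ (n := n + 1), ite_and]

lemma sum_map_X_pow_descentCount_permutations'Aux {a : α} :
    ∀ {w : List α}, (∀ x ∈ w, x < a) →
      ((permutations'Aux a w).map fun u => (X : ℤ[X]) ^ u.descentCount).sum =
        (w.descentCount + 1 : ℤ[X]) * X ^ w.descentCount +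
          (w.length - w.descentCount : ℤ[X]) * X ^ (w.descentCount + 1)
  | [], _ => by simp [permutations'Aux]
  | [b], h => by
    have hb : b < a := h b (by simp)
    simp [permutations'Aux, hb, hb.not_gt, add_comm]
  | b :: c :: t, h => by
    have ih := sum_map_X_pow_descentCount_permutations'Aux (w := c :: t)
      fun x hx => h x (mem_cons_of_mem b hx)
    have hb : b < a := h b (by simp)
    have hc : c < a := h c (by simp)
    simp only [permutations'Aux, map_cons, sum_cons, map_map, Function.comp_def] at ih ⊢
    simp only [descentCount_cons_cons, if_pos hb, if_pos hc, if_neg hb.not_gt, length_cons,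
      pow_add, pow_one, sum_map_mul_left] at ih ⊢
    split_ifs
    · push_cast at ih ⊢
      linear_combination (X : ℤ[X]) * ih
    · simp only [pow_zero, one_mul] at ih ⊢
      push_cast at ih ⊢
      linear_combination ih

noncomputable def descentPoly (L : List α) : ℤ[X] :=
  (L.permutations'.map fun w => X ^ w.descentCount).sum

lemma descentPoly_perm {L L' : List α} (h : L ~ L') : descentPoly L = descentPoly L' :=
  (h.permutations'.map _).sum_eq

lemma descentPoly_map_of_strictMono {f : α → β} (hf : StrictMono f) (L : List α) :
    descentPoly (L.map f) = descentPoly L := by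
  simp only [descentPoly, ← map_permutations', List.map_map, Function.comp_def,
    descentCount_map_of_strictMono hf]

lemma descentPoly_cons {a : α} {L : List α} (h : ∀ x ∈ L, x < a) :
    descentPoly (a :: L) = eulerianStep L.length (descentPoly L) := by
  have insertions : ∀ w ∈ L.permutations',
      ((permutations'Aux a w).map fun u => (X : ℤ[X]) ^ u.descentCount).sum =
        eulerianStep L.length (X ^ w.descentCount) := by
    intro w hw
    have hw := mem_permutations'.1 hw
    rw [sum_map_X_pow_descentCount_permutations'Aux fun x hx => h x (hw.mem_iff.1 hx),
      ← hw.length_eq, eulerianStep_apply]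
    cases w.descentCount with
    | zero => simp
    | succ d =>
      simp only [derivative_X_pow_succ, map_add, map_natCast, map_one, Nat.cast_add, Nat.cast_one]
      ring
  unfold descentPoly
  rw [permutations', map_flatMap, flatMap_def, sum_flatten, List.map_map, Function.comp_def,
    map_congr_left insertions, map_list_sum, List.map_map]
  rfl

lemma descentPoly_range_succ (n : ℕ) :
    descentPoly (range (n + 1)) = eulerianStep n (descentPoly (range n)) := by
  rw [descentPoly_perm (range_succ ▸ perm_append_singleton n (range n)),
    descentPoly_cons fun x hx => mem_range.1 hx, length_range]

lemma sum_perm_ofFn_eq_sum_permutations' {M : Type*} [AddCommMonoid M] (n : ℕ)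
    (g : List (Fin n) → M) :
    ∑ π : Equiv.Perm (Fin n), g (ofFn π) = ((finRange n).permutations'.map g).sum := by
  classical
  have hnodup : (finRange n).permutations'.Nodup :=
    (permutations_perm_permutations' _).nodup_iff.1 (nodup_permutations _ (nodup_finRange n))
  have hinj : Function.Injective fun π : Equiv.Perm (Fin n) => ofFn π :=
    ofFn_injective.comp DFunLike.coe_injective
  -- both sides have `n!` elements, so no inverse map needs to be built
  have himage : Finset.univ.image (fun π : Equiv.Perm (Fin n) => ofFn π) =
      (finRange n).permutations'.toFinset := by
    refine Finset.eq_of_subset_of_card_le (fun w hw => ?_) ?_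
    · obtain ⟨π, -, rfl⟩ := Finset.mem_image.1 hw
      rw [mem_toFinset, mem_permutations', ofFn_eq_map]
      exact π.map_finRange_perm
    · rw [toFinset_card_of_nodup hnodup, Finset.card_image_of_injective _ hinj,
        ← (permutations_perm_permutations' _).length_eq, length_permutations, Finset.card_univ,
        Fintype.card_perm, Fintype.card_fin, length_finRange]
  rw [← sum_toFinset _ hnodup, ← himage, Finset.sum_image fun π _ σ _ h => hinj h]

end List

lemma sum_X_pow_des_eq_descentPoly_range (n : ℕ) :
    ∑ π : Equiv.Perm (Fin n), (X : ℤ[X]) ^ des π = (List.range n).descentPoly := by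
  simp only [des, ← List.descentCount_ofFn]
  rw [← List.map_coe_finRange_eq_range, List.descentPoly_map_of_strictMono Fin.val_strictMono]
  exact List.sum_perm_ofFn_eq_sum_permutations' n fun w => X ^ w.descentCount

lemma isGammaPositive_descentPoly_range_succ (n : ℕ) :
    IsGammaPositive n (List.range (n + 1)).descentPoly := by
  induction n with
  | zero => exact ⟨1, by simp [List.descentPoly]⟩
  | succ n ih =>
    rw [List.descentPoly_range_succ]
    exact ih.eulerianStep

theorem stmt3_general (n : ℕ) :
    ∃ γ : ℕ → ℕ,
      (∑ π : Equiv.Perm (Fin n), (X : Polynomial ℤ) ^ des π) =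
        ∑ j ∈ Finset.range ((n - 1) / 2 + 1),
          (γ j : Polynomial ℤ) * X ^ j * (1 + X) ^ (n - 1 - 2 * j) := by
  rcases n with _ | n
  · exact ⟨1, by simp [des]⟩
  · rw [sum_X_pow_des_eq_descentPoly_range, Nat.add_sub_cancel]
    exact isGammaPositive_descentPoly_range_succ n

/-- Foata–Schützenberger: the Eulerian polynomial `A_n(q) = Σ_{π ∈ S_n} q^{des π}`
is gamma-positive. -/
theorem stmt3 (n : ℕ) (hn : 1 ≤ n) :
    ∃ γ : ℕ → ℕ,
      (∑ π : Equiv.Perm (Fin n), (X : Polynomial ℤ) ^ des π) =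
        ∑ j ∈ Finset.range ((n - 1) / 2 + 1),
          (γ j : Polynomial ℤ) * X ^ j * (1 + X) ^ (n - 1 - 2 * j) :=
  stmt3_general n
end

section
/- For every integer n ≥ 1, the set of bivariate polynomials f(s,t) ∈ ℚ[s,t] satisfying f(s,t) = (st)^{n−1} f(1/s,1/t) and f(s,t) = f(t,s) (bivariate palindromic of darga n−1) is a ℚ-vector subspace of ℚ[s,t] of dimension ⌊(n+1)/2⌋·⌊(n+2)/2⌋, and the set {(st)^i (s+t)^j (1+st)^{n−1−j−2i} : i, j ≥ 0, 2i + j ≤ n−1} is a basis of this subspace. -/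
open MvPolynomial

/-- The coefficient of `s^a t^b` in a bivariate polynomial (`s = X 0`, `t = X 1`). -/
noncomputable def biCoeff (f : MvPolynomial (Fin 2) ℚ) (a b : ℕ) : ℚ :=
  MvPolynomial.coeff (Finsupp.single 0 a + Finsupp.single 1 b) f

/-- A bivariate polynomial `f(s,t)` is palindromic of darga `d` if
`f(s,t) = (st)^d f(1/s,1/t)` (i.e. the coefficient of `s^a t^b` equals the
coefficient of `s^{d-a} t^{d-b}`, and all exponents are at most `d`) and
`f(s,t) = f(t,s)`. -/
def BiPalindromicOfDarga (d : ℕ) (f : MvPolynomial (Fin 2) ℚ) : Prop :=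
  (∀ a b : ℕ, (d < a ∨ d < b) → biCoeff f a b = 0) ∧
  (∀ a b : ℕ, a ≤ d → b ≤ d → biCoeff f a b = biCoeff f (d - a) (d - b)) ∧
  (∀ a b : ℕ, biCoeff f a b = biCoeff f b a)


/-!
The polynomials `P i j k = (st)^i (s+t)^j (1+st)^k` with `2i + j + k = d` are palindromic of
darga `d`, as reflecting the indices of their binomial expansion shows. The coefficient of `P i j k` at `s^a t^b` vanishes
unless `a + b ≥ 2i + j` and `a ≥ i`, and equals `1` at `(a, b) = (i, i + j)`, so under the
functionals `f ↦ [s^i t^(i+j)] f` the family is unitriangular for the lexicographic order on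
`(2i + j, i)`; hence it is linearly independent. Conversely, by symmetry and palindromicity a
palindromic polynomial of darga `d` is determined by these same coefficients, so the space has
dimension at most the number of pairs `(i, j)` with `2i + j ≤ d`.
-/

open Finset

section Triangular

variable {ι R M α : Type*} [Ring R] [NoZeroDivisors R] [AddCommGroup M] [Module R M]
  [LinearOrder α]

theorem linearIndependent_of_triangular (v : ι → M) (φ : ι → M →ₗ[R] R) (key : ι → α)
    (hkey : Function.Injective key) (hdiag : ∀ i, φ i (v i) ≠ 0)
    (htri : ∀ i j, key i < key j → φ i (v j) = 0) :
    LinearIndependent R v := by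
  classical
  rw [linearIndependent_iff']
  intro s g hg
  by_contra! hne
  obtain ⟨i₀, hi₀s, hi₀⟩ := hne
  obtain ⟨i, hi, hmin⟩ :=
    (s.filter (g · ≠ 0)).exists_min_image key ⟨i₀, mem_filter.mpr ⟨hi₀s, hi₀⟩⟩
  obtain ⟨his, hgi⟩ := mem_filter.mp hi
  have hφ : ∑ j ∈ s, g j * φ i (v j) = 0 := by simpa using congrArg (φ i) hg
  rw [sum_eq_single_of_mem i his] at hφ
  · exact mul_ne_zero hgi (hdiag i) hφ
  intro j hjs hji
  by_cases hgj : g j = 0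
  · rw [hgj, zero_mul]
  have hle := hmin j (mem_filter.mpr ⟨hjs, hgj⟩)
  rw [htri i j (lt_of_le_of_ne hle (hkey.ne (Ne.symm hji))), mul_zero]

end Triangular

lemma single_add_single_eq_iff {A B a b : ℕ} :
    Finsupp.single (0 : Fin 2) A + Finsupp.single 1 B = Finsupp.single 0 a + Finsupp.single 1 b ↔
      A = a ∧ B = b := by
  refine ⟨fun h => ⟨?_, ?_⟩, fun ⟨hA, hB⟩ => hA ▸ hB ▸ rfl⟩
  · simpa using DFunLike.congr_fun h 0
  · simpa using DFunLike.congr_fun h 1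

theorem ext_biCoeff {f g : MvPolynomial (Fin 2) ℚ} (h : ∀ a b, biCoeff f a b = biCoeff g a b) :
    f = g := by
  ext m
  have hm : m = Finsupp.single 0 (m 0) + Finsupp.single 1 (m 1) := by
    ext x; fin_cases x <;> simp
  rw [hm]
  exact h (m 0) (m 1)

@[simp]
lemma biCoeff_zero (a b : ℕ) : biCoeff 0 a b = 0 := coeff_zero _

@[simp]
lemma biCoeff_add (f g : MvPolynomial (Fin 2) ℚ) (a b : ℕ) :
    biCoeff (f + g) a b = biCoeff f a b + biCoeff g a b := coeff_add _ _ _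

@[simp]
lemma biCoeff_smul (c : ℚ) (f : MvPolynomial (Fin 2) ℚ) (a b : ℕ) :
    biCoeff (c • f) a b = c * biCoeff f a b := coeff_smul _ _ _

lemma biCoeff_sum {ι : Type*} (s : Finset ι) (F : ι → MvPolynomial (Fin 2) ℚ) (a b : ℕ) :
    biCoeff (∑ i ∈ s, F i) a b = ∑ i ∈ s, biCoeff (F i) a b := coeff_sum _ _ _

lemma biCoeff_C_mul_X_pow_mul_X_pow (c : ℚ) (A B a b : ℕ) :
    biCoeff (C c * X 0 ^ A * X 1 ^ B) a b = if A = a ∧ B = b then c else 0 := by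
  rw [biCoeff, X_pow_eq_monomial, X_pow_eq_monomial, C_mul_monomial, monomial_mul, mul_one,
    mul_one, coeff_monomial]
  exact if_congr single_add_single_eq_iff rfl rfl

noncomputable def biCoeffLinear (a b : ℕ) : MvPolynomial (Fin 2) ℚ →ₗ[ℚ] ℚ :=
  lcoeff ℚ (Finsupp.single 0 a + Finsupp.single 1 b)

lemma biCoeffLinear_apply (a b : ℕ) (f : MvPolynomial (Fin 2) ℚ) :
    biCoeffLinear a b f = biCoeff f a b := rfl

def palindromicSubmodule (d : ℕ) : Submodule ℚ (MvPolynomial (Fin 2) ℚ) where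
  carrier := {f | BiPalindromicOfDarga d f}
  add_mem' := by
    rintro f g ⟨hf₁, hf₂, hf₃⟩ ⟨hg₁, hg₂, hg₃⟩
    refine ⟨fun a b h => ?_, fun a b ha hb => ?_, fun a b => ?_⟩
    · rw [biCoeff_add, hf₁ a b h, hg₁ a b h, add_zero]
    · rw [biCoeff_add, biCoeff_add, hf₂ a b ha hb, hg₂ a b ha hb]
    · rw [biCoeff_add, biCoeff_add, hf₃ a b, hg₃ a b]
  zero_mem' := ⟨fun _ _ _ => biCoeff_zero _ _, fun _ _ _ _ => by simp, fun _ _ => by simp⟩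
  smul_mem' := by
    rintro c f ⟨hf₁, hf₂, hf₃⟩
    refine ⟨fun a b h => ?_, fun a b ha hb => ?_, fun a b => ?_⟩
    · rw [biCoeff_smul, hf₁ a b h, mul_zero]
    · rw [biCoeff_smul, biCoeff_smul, hf₂ a b ha hb]
    · rw [biCoeff_smul, biCoeff_smul, hf₃ a b]

lemma mem_palindromicSubmodule {d : ℕ} {f : MvPolynomial (Fin 2) ℚ} :
    f ∈ palindromicSubmodule d ↔ BiPalindromicOfDarga d f := Iff.rfl

abbrev PalIndex (d : ℕ) := {p : ℕ × ℕ // 2 * p.1 + p.2 ≤ d}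

def palIndexFinset (d : ℕ) : Finset (ℕ × ℕ) :=
  (range (d + 1) ×ˢ range (d + 1)).filter fun p => 2 * p.1 + p.2 ≤ d

lemma mem_palIndexFinset {d : ℕ} {p : ℕ × ℕ} : p ∈ palIndexFinset d ↔ 2 * p.1 + p.2 ≤ d := by
  simp only [palIndexFinset, mem_filter, mem_product, mem_range]
  omega

noncomputable instance (d : ℕ) : Fintype (PalIndex d) :=
  Fintype.subtype (palIndexFinset d) fun _ => mem_palIndexFinset

lemma card_palIndexFinset (d : ℕ) : #(palIndexFinset d) = (d + 2) / 2 * ((d + 3) / 2) := by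
  induction d with
  | zero => decide
  | succ d ih =>
    set layer := (range ((d + 1) / 2 + 1)).image fun i => (i, d + 1 - 2 * i)
    have hsplit : palIndexFinset (d + 1) = palIndexFinset d ∪ layer := by
      ext ⟨i, j⟩
      simp only [mem_palIndexFinset, mem_union, layer, mem_image, mem_range, Prod.mk.injEq]
      constructor
      · intro h
        by_cases h' : 2 * i + j ≤ d
        · exact Or.inl h'
        · exact Or.inr ⟨i, by omega, rfl, by omega⟩
      · rintro (h | ⟨i, hi, rfl, rfl⟩) <;> omega
    have hdisj : Disjoint (palIndexFinset d) layer := by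
      simp only [disjoint_left, mem_palIndexFinset, layer, mem_image, mem_range]
      rintro _ hp ⟨i, hi, rfl⟩
      dsimp only at hp
      omega
    have hlayer : #layer = (d + 3) / 2 := by
      rw [card_image_of_injective _ fun x y h => (Prod.ext_iff.mp h).1, card_range]
      omega
    rw [hsplit, card_union_of_disjoint hdisj, ih, hlayer,
      show (d + 1 + 2) / 2 = (d + 3) / 2 by omega, show (d + 1 + 3) / 2 = (d + 2) / 2 + 1 by omega]
    ring

lemma card_palIndex (d : ℕ) : Fintype.card (PalIndex d) = (d + 2) / 2 * ((d + 3) / 2) := by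
  rw [Fintype.subtype_card, card_palIndexFinset]

noncomputable def palBasisPoly (i j k : ℕ) : MvPolynomial (Fin 2) ℚ :=
  (X 0 * X 1) ^ i * (X 0 + X 1) ^ j * (1 + X 0 * X 1) ^ k

lemma palBasisPoly_eq_sum (i j k : ℕ) :
    palBasisPoly i j k = ∑ u ∈ range (j + 1), ∑ m ∈ range (k + 1),
      C (j.choose u * k.choose m : ℚ) * X 0 ^ (i + u + m) * X 1 ^ (i + (j - u) + m) := by
  rw [palBasisPoly, add_comm 1, mul_assoc, add_pow, add_pow, sum_mul_sum]
  simp only [mul_sum]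
  refine sum_congr rfl fun u _ => sum_congr rfl fun m _ => ?_
  simp only [one_pow, mul_one, map_mul, map_natCast]
  ring

lemma biCoeff_palBasisPoly (i j k a b : ℕ) :
    biCoeff (palBasisPoly i j k) a b = ∑ u ∈ range (j + 1), ∑ m ∈ range (k + 1),
      if i + u + m = a ∧ i + (j - u) + m = b then (j.choose u * k.choose m : ℚ) else 0 := by
  simp only [palBasisPoly_eq_sum, biCoeff_sum, biCoeff_C_mul_X_pow_mul_X_pow]

lemma biCoeff_palBasisPoly_eq_zero_of_lt {i j k a b : ℕ}
    (h : toLex (a + b, a) < toLex (2 * i + j, i)) :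
    biCoeff (palBasisPoly i j k) a b = 0 := by
  rw [Prod.Lex.toLex_lt_toLex] at h
  rw [biCoeff_palBasisPoly]
  refine sum_eq_zero fun u hu => sum_eq_zero fun m _ => if_neg ?_
  have := mem_range.mp hu
  omega

lemma biCoeff_palBasisPoly_self (i j k : ℕ) : biCoeff (palBasisPoly i j k) i (i + j) = 1 := by
  rw [biCoeff_palBasisPoly, sum_eq_single_of_mem 0 (by simp), sum_eq_single_of_mem 0 (by simp)]
  · simp
  · intro m _ hm
    exact if_neg (by omega)
  · intro u hu hu0
    refine sum_eq_zero fun m _ => if_neg ?_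
    have := mem_range.mp hu
    omega

theorem biPalindromicOfDarga_palBasisPoly (i j k : ℕ) :
    BiPalindromicOfDarga (2 * i + j + k) (palBasisPoly i j k) := by
  refine ⟨fun a b hab => ?_, fun a b ha hb => ?_, fun a b => ?_⟩
  · rw [biCoeff_palBasisPoly]
    refine sum_eq_zero fun u hu => sum_eq_zero fun m hm => if_neg ?_
    have := mem_range.mp hu
    have := mem_range.mp hm
    omega
  · rw [biCoeff_palBasisPoly, biCoeff_palBasisPoly, ← sum_range_reflect]
    -- reflect both summation indices: `u ↦ j - u`, `m ↦ k - m`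
    refine sum_congr rfl fun u hu => ?_
    rw [← sum_range_reflect]
    refine sum_congr rfl fun m hm => ?_
    have hu := mem_range.mp hu
    have hm := mem_range.mp hm
    simp only [add_tsub_cancel_right]
    rw [Nat.choose_symm (by omega : u ≤ j), Nat.choose_symm (by omega : m ≤ k)]
    exact if_congr (by omega) rfl rfl
  · rw [biCoeff_palBasisPoly, biCoeff_palBasisPoly, ← sum_range_reflect]
    refine sum_congr rfl fun u hu => sum_congr rfl fun m _ => ?_
    have hu := mem_range.mp hu
    simp only [add_tsub_cancel_right]
    rw [Nat.choose_symm (by omega : u ≤ j)]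
    exact if_congr (by omega) rfl rfl

noncomputable def palCoeffs (d : ℕ) : MvPolynomial (Fin 2) ℚ →ₗ[ℚ] (PalIndex d → ℚ) :=
  LinearMap.pi fun p => biCoeffLinear p.1.1 (p.1.1 + p.1.2)

@[simp]
lemma palCoeffs_apply (d : ℕ) (f : MvPolynomial (Fin 2) ℚ) (p : PalIndex d) :
    palCoeffs d f p = biCoeff f p.1.1 (p.1.1 + p.1.2) := rfl

-- Symmetry reduces to `a ≤ b`, palindromicity to `a + b ≤ d`, and the degree bound does the rest.
theorem BiPalindromicOfDarga.eq_zero_of_palCoeffs_eq_zero {d : ℕ} {f : MvPolynomial (Fin 2) ℚ}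
    (hf : BiPalindromicOfDarga d f) (h0 : palCoeffs d f = 0) : f = 0 := by
  obtain ⟨hbound, hrefl, hsymm⟩ := hf
  have hle : ∀ a b, a ≤ b → a + b ≤ d → biCoeff f a b = 0 := fun a b hab hs => by
    simpa [show a + (b - a) = b by omega] using congrFun h0 ⟨(a, b - a), by omega⟩
  have hlow : ∀ a b, a + b ≤ d → biCoeff f a b = 0 := fun a b hs => by
    rcases le_total a b with h | h
    · exact hle a b h hs
    · rw [hsymm]
      exact hle b a h (by omega)
  refine ext_biCoeff fun a b => ?_
  rw [biCoeff_zero]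
  by_cases hab : a ≤ d ∧ b ≤ d
  · rcases le_or_gt (a + b) d with hs | hs
    · exact hlow a b hs
    · rw [hrefl a b hab.1 hab.2]
      exact hlow _ _ (by omega)
  · exact hbound a b (by omega)

lemma palCoeffs_domRestrict_injective (d : ℕ) :
    Function.Injective ((palCoeffs d).domRestrict (palindromicSubmodule d)) := by
  rw [← LinearMap.ker_eq_bot, LinearMap.ker_eq_bot']
  rintro ⟨f, hf⟩ h0
  exact Subtype.ext (BiPalindromicOfDarga.eq_zero_of_palCoeffs_eq_zero hf h0)

instance (d : ℕ) : FiniteDimensional ℚ (palindromicSubmodule d) :=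
  FiniteDimensional.of_injective _ (palCoeffs_domRestrict_injective d)

theorem finrank_palindromicSubmodule_le (d : ℕ) :
    Module.finrank ℚ (palindromicSubmodule d) ≤ Fintype.card (PalIndex d) := by
  simpa using LinearMap.finrank_le_finrank_of_injective (palCoeffs_domRestrict_injective d)

noncomputable def palBasisFamily (d : ℕ) (p : PalIndex d) : MvPolynomial (Fin 2) ℚ :=
  palBasisPoly p.1.1 p.1.2 (d - p.1.2 - 2 * p.1.1)

lemma palBasisFamily_mem (d : ℕ) (p : PalIndex d) :
    palBasisFamily d p ∈ palindromicSubmodule d := by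
  have h := biPalindromicOfDarga_palBasisPoly p.1.1 p.1.2 (d - p.1.2 - 2 * p.1.1)
  rwa [show 2 * p.1.1 + p.1.2 + (d - p.1.2 - 2 * p.1.1) = d by omega] at h

theorem linearIndependent_palBasisFamily (d : ℕ) : LinearIndependent ℚ (palBasisFamily d) := by
  refine linearIndependent_of_triangular _ (fun p => biCoeffLinear p.1.1 (p.1.1 + p.1.2))
    (fun p => toLex (2 * p.1.1 + p.1.2, p.1.1)) (fun p q h => ?_) (fun p => ?_) (fun p q h => ?_)
  · simp only [toLex_inj, Prod.mk.injEq] at h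
    ext <;> omega
  · simp [biCoeffLinear_apply, palBasisFamily, biCoeff_palBasisPoly_self]
  · rw [biCoeffLinear_apply, palBasisFamily]
    exact biCoeff_palBasisPoly_eq_zero_of_lt (by rwa [← add_assoc, ← two_mul])

theorem span_palBasisFamily (d : ℕ) :
    Submodule.span ℚ (Set.range (palBasisFamily d)) = palindromicSubmodule d := by
  refine Submodule.eq_of_le_of_finrank_le
    (Submodule.span_le.mpr (Set.range_subset_iff.mpr (palBasisFamily_mem d))) ?_
  rw [finrank_span_eq_card (linearIndependent_palBasisFamily d)]
  exact finrank_palindromicSubmodule_le d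

/-- For every `n ≥ 1`, the bivariate palindromic polynomials of darga `n-1` form a
`ℚ`-vector subspace of `ℚ[s,t]` of dimension `⌊(n+1)/2⌋ ⌊(n+2)/2⌋`, with basis
`{(st)^i (s+t)^j (1+st)^{n-1-j-2i} : i, j ≥ 0, 2i + j ≤ n-1}`. -/
theorem stmt5 (n : ℕ) (hn : 1 ≤ n) :
    ∃ V : Submodule ℚ (MvPolynomial (Fin 2) ℚ),
      (∀ f : MvPolynomial (Fin 2) ℚ, f ∈ V ↔ BiPalindromicOfDarga (n - 1) f) ∧
      Module.finrank ℚ V = ((n + 1) / 2) * ((n + 2) / 2) ∧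
      ∃ b : Module.Basis {p : ℕ × ℕ // 2 * p.1 + p.2 ≤ n - 1} ℚ V,
        ∀ p : {p : ℕ × ℕ // 2 * p.1 + p.2 ≤ n - 1},
          (b p : MvPolynomial (Fin 2) ℚ) =
            (X 0 * X 1) ^ p.val.1 * (X 0 + X 1) ^ p.val.2 *
              (1 + X 0 * X 1) ^ (n - 1 - p.val.2 - 2 * p.val.1) := by
  let b := (Module.Basis.span (linearIndependent_palBasisFamily (n - 1))).map
    (LinearEquiv.ofEq _ _ (span_palBasisFamily (n - 1)))
  refine ⟨palindromicSubmodule (n - 1), fun f => mem_palindromicSubmodule, ?_, b, fun p => ?_⟩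
  · rw [Module.finrank_eq_card_basis b, card_palIndex,
      show n - 1 + 2 = n + 1 by omega, show n - 1 + 3 = n + 2 by omega]
  · simp [b, Module.Basis.span_apply, palBasisFamily, palBasisPoly]
end

section
/- (Fu–Lin–Zeng.) For each n ≥ 1 there exist nonnegative integers γ_{n,k}, for 0 ≤ k ≤ ⌊(n−1)/2⌋, such that Σ_{π ∈ H(2) ∩ S_n} t^{des(π)} = Σ_{k=0}^{⌊(n−1)/2⌋} γ_{n,k} t^k (1+t)^{n−1−2k}. -/
/-- The number of descents of the inverse permutation. -/
def ides {n : ℕ} (π : Equiv.Perm (Fin n)) : ℕ := des π⁻¹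

/-- The direct sum `π ⊕ τ` of permutations: `(π ⊕ τ) i = π i` for `i < m`
and `(π ⊕ τ) (m + j) = m + τ j`. -/
def directSum {m k : ℕ} (π : Equiv.Perm (Fin m)) (τ : Equiv.Perm (Fin k)) :
    Equiv.Perm (Fin (m + k)) :=
  finSumFinEquiv.permCongr (Equiv.sumCongr π τ)

/-- The skew sum `π ⊖ τ` of permutations: `(π ⊖ τ) i = k + π i` for `i < m`
and `(π ⊖ τ) (m + j) = τ j`. -/
def skewSum {m k : ℕ} (π : Equiv.Perm (Fin m)) (τ : Equiv.Perm (Fin k)) :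
    Equiv.Perm (Fin (m + k)) :=
  (finSumFinEquiv.symm.trans
    ((Equiv.sumCongr π τ).trans (Equiv.sumComm (Fin m) (Fin k)))).trans
    (finSumFinEquiv.trans (finCongr (Nat.add_comm k m)))

/-- The separable permutations (the class `H(2)`): the smallest class of permutations
containing the trivial permutation of length 1 and closed under direct sums and
skew sums. -/
inductive SeparablePerm : {n : ℕ} → Equiv.Perm (Fin n) → Prop
  | one : SeparablePerm (1 : Equiv.Perm (Fin 1))
  | dsum {m k : ℕ} {π : Equiv.Perm (Fin m)} {τ : Equiv.Perm (Fin k)} :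
      SeparablePerm π → SeparablePerm τ → SeparablePerm (directSum π τ)
  | ssum {m k : ℕ} {π : Equiv.Perm (Fin m)} {τ : Equiv.Perm (Fin k)} :
      SeparablePerm π → SeparablePerm τ → SeparablePerm (skewSum π τ)


/-!
A separable permutation of length `n ≥ 2` is a direct sum or a skew sum, and never both. Cutting a
direct sum at its last split point, and a skew sum likewise after complementing values, gives for
the descent polynomials `Aₙ`, `Mₙ`, `Pₙ` of all, of `⊖`-indecomposable and of `⊕`-indecomposable
separable permutations of length `n ≥ 2`:
`Aₙ = Mₙ + Pₙ`, `Mₙ = ∑ₘ Aₘ Pₙ₋ₘ`, `Pₙ = x ∑ₘ Aₘ Mₙ₋ₘ`.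
By strong induction `Mₙ = aₙ + bₙ` and `Pₙ = aₙ + x bₙ`, where `aₙ = ∑ₘ Aₘ x bₙ₋ₘ` and
`bₙ = ∑ₘ Aₘ aₙ₋ₘ` are gamma-positive with centres `(n - 1) / 2` and `(n - 2) / 2`; hence
`Aₙ = 2 aₙ + (1 + x) bₙ` is gamma-positive with centre `(n - 1) / 2`.
-/
open Equiv Finset

section NatAct

/-- A permutation of `Fin n` as a function on `ℕ` fixing every `i ≥ n`; this moves the index
arithmetic of direct and skew sums into `ℕ`, where `omega` handles it. -/
def natAct {n : ℕ} (π : Perm (Fin n)) (i : ℕ) : ℕ :=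
  if h : i < n then π ⟨i, h⟩ else i

variable {n : ℕ}

lemma natAct_of_lt (π : Perm (Fin n)) {i : ℕ} (h : i < n) : natAct π i = π ⟨i, h⟩ :=
  dif_pos h

lemma natAct_lt (π : Perm (Fin n)) {i : ℕ} (h : i < n) : natAct π i < n := by
  simp [natAct_of_lt π h]

lemma natAct_inj (π : Perm (Fin n)) {i j : ℕ} (hi : i < n) (hj : j < n) :
    natAct π i = natAct π j ↔ i = j := by
  simp [natAct_of_lt π hi, natAct_of_lt π hj, Fin.val_inj]

lemma natAct_ext {π π' : Perm (Fin n)} (h : ∀ i < n, natAct π i = natAct π' i) : π = π' := by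
  ext i
  simpa [natAct_of_lt _ i.is_lt] using h i i.is_lt

lemma natAct_directSum {m k : ℕ} (σ : Perm (Fin m)) (τ : Perm (Fin k)) {i : ℕ}
    (hi : i < m + k) :
    natAct (directSum σ τ) i = if i < m then natAct σ i else m + natAct τ (i - m) := by
  rw [natAct_of_lt _ hi]
  split_ifs with h
  · have : (⟨i, hi⟩ : Fin (m + k)) = Fin.castAdd k ⟨i, h⟩ := rfl
    rw [this, directSum, permCongr_apply, finSumFinEquiv_symm_apply_castAdd]
    simp [natAct_of_lt σ h]
  · have hik : i - m < k := by omega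
    have : (⟨i, hi⟩ : Fin (m + k)) = Fin.natAdd m ⟨i - m, hik⟩ :=
      Fin.ext (by simp only [Fin.natAdd_mk]; omega)
    rw [this, directSum, permCongr_apply, finSumFinEquiv_symm_apply_natAdd]
    simp [natAct_of_lt τ hik]

lemma natAct_skewSum {m k : ℕ} (σ : Perm (Fin m)) (τ : Perm (Fin k)) {i : ℕ}
    (hi : i < m + k) :
    natAct (skewSum σ τ) i = if i < m then k + natAct σ i else natAct τ (i - m) := by
  rw [natAct_of_lt _ hi]
  split_ifs with h
  · have : (⟨i, hi⟩ : Fin (m + k)) = Fin.castAdd k ⟨i, h⟩ := rfl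
    simp only [skewSum, trans_apply, this, finSumFinEquiv_symm_apply_castAdd]
    simp [natAct_of_lt σ h, Nat.add_comm]
  · have hik : i - m < k := by omega
    have : (⟨i, hi⟩ : Fin (m + k)) = Fin.natAdd m ⟨i - m, hik⟩ :=
      Fin.ext (by simp only [Fin.natAdd_mk]; omega)
    simp only [skewSum, trans_apply, this, finSumFinEquiv_symm_apply_natAdd]
    simp [natAct_of_lt τ hik]

lemma natAct_revPerm_mul (π : Perm (Fin n)) {i : ℕ} (hi : i < n) :
    natAct (Fin.revPerm * π) i = n - 1 - natAct π i := by
  simp [natAct_of_lt _ hi, Fin.rev]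
  omega

end NatAct

section CastPerm

def castPerm {a b : ℕ} (h : a = b) (π : Perm (Fin a)) : Perm (Fin b) :=
  (finCongr h).permCongr π

@[simp] lemma castPerm_rfl {a : ℕ} (π : Perm (Fin a)) : castPerm rfl π = π := by
  ext i; simp [castPerm]

lemma apply_castPerm {R : Type*} (F : ∀ {n : ℕ}, Perm (Fin n) → R) {a b : ℕ} (h : a = b)
    (π : Perm (Fin a)) : F (castPerm h π) = F π := by
  subst h; simp

lemma castPerm_castPerm {a b c : ℕ} (h₁ : a = b) (h₂ : b = c) (π : Perm (Fin a)) :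
    castPerm h₂ (castPerm h₁ π) = castPerm (h₁.trans h₂) π := by
  subst h₁ h₂; simp

lemma castPerm_injective {a b : ℕ} (h : a = b) : Function.Injective (castPerm h) := by
  intro π π' hπ
  subst h
  simpa using hπ

lemma separablePerm_castPerm {a b : ℕ} (h : a = b) {π : Perm (Fin a)} (hπ : SeparablePerm π) :
    SeparablePerm (castPerm h π) := by
  subst h; simpa using hπ

lemma directSum_castPerm_left {a a' k : ℕ} (h : a = a') (σ : Perm (Fin a)) (τ : Perm (Fin k)) :
    directSum (castPerm h σ) τ = castPerm (by rw [h]) (directSum σ τ) := by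
  subst h; simp

lemma directSum_castPerm_right {a k k' : ℕ} (h : k = k') (σ : Perm (Fin a)) (τ : Perm (Fin k)) :
    directSum σ (castPerm h τ) = castPerm (by rw [h]) (directSum σ τ) := by
  subst h; simp

lemma directSum_assoc {a b c : ℕ} (σ : Perm (Fin a)) (τ : Perm (Fin b)) (ρ : Perm (Fin c)) :
    directSum (directSum σ τ) ρ =
      castPerm (Nat.add_assoc a b c).symm (directSum σ (directSum τ ρ)) := by
  refine natAct_ext fun i hi => ?_
  rw [apply_castPerm (fun π => natAct π i), natAct_directSum _ _ hi,
    natAct_directSum _ _ (by omega : i < a + (b + c))]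
  by_cases h₁ : i < a
  · rw [if_pos (by omega), natAct_directSum _ _ (by omega), if_pos h₁, if_pos h₁]
  by_cases h₂ : i < a + b
  · rw [if_pos h₂, if_neg h₁, natAct_directSum _ _ (by omega), if_neg h₁,
      natAct_directSum _ _ (by omega : i - a < b + c), if_pos (by omega)]
  · rw [if_neg h₂, if_neg h₁, natAct_directSum _ _ (by omega : i - a < b + c), if_neg (by omega),
      show i - (a + b) = i - a - b by omega]
    omega

lemma directSum_injective {m k : ℕ} {σ σ' : Perm (Fin m)} {τ τ' : Perm (Fin k)}
    (h : directSum σ τ = directSum σ' τ') : σ = σ' ∧ τ = τ' := by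
  have h' i := congrArg (fun ρ => natAct ρ i) h
  refine ⟨natAct_ext fun i hi => ?_, natAct_ext fun j hj => ?_⟩
  · simpa [natAct_directSum _ _ (by omega : i < m + k), hi] using h' i
  · simpa [natAct_directSum _ _ (by omega : m + j < m + k)] using h' (m + j)

end CastPerm

section Descents

variable {n : ℕ}

lemma des_eq_sum (π : Perm (Fin n)) :
    des π = ∑ i ∈ range (n - 1), if natAct π (i + 1) < natAct π i then 1 else 0 := by
  rw [← card_filter, des]
  refine card_bij (fun p _ => (p.1 : ℕ)) ?_ ?_ ?_
  · rintro ⟨x, y⟩ hp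
    simp only [mem_filter, mem_univ, true_and] at hp ⊢
    obtain ⟨hxy, hlt⟩ := hp
    refine ⟨mem_range.mpr (by omega), ?_⟩
    rwa [← hxy, natAct_of_lt _ y.is_lt, natAct_of_lt _ x.is_lt]
  · rintro ⟨x, y⟩ hp ⟨x', y'⟩ hp' (hxx' : (x : ℕ) = x')
    simp only [mem_filter, mem_univ, true_and] at hp hp'
    simp only [Prod.mk.injEq, ← Fin.val_inj]
    omega
  · intro i hi
    simp only [mem_filter, mem_range] at hi
    obtain ⟨hi, hlt⟩ := hi
    rw [natAct_of_lt _ (by omega), natAct_of_lt _ (by omega)] at hlt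
    exact ⟨(⟨i, by omega⟩, ⟨i + 1, by omega⟩), by simpa using hlt, rfl⟩

lemma des_directSum {m k : ℕ} (σ : Perm (Fin m)) (τ : Perm (Fin k)) (hm : 0 < m) (hk : 0 < k) :
    des (directSum σ τ) = des σ + des τ := by
  rw [des_eq_sum, des_eq_sum σ, des_eq_sum τ, show m + k - 1 = m - 1 + 1 + (k - 1) by omega,
    sum_range_add, sum_range_succ]
  have hσ : ∀ i < m, natAct (directSum σ τ) i = natAct σ i := fun i hi => by
    rw [natAct_directSum _ _ (by omega), if_pos hi]
  have hτ : ∀ j < k, natAct (directSum σ τ) (m + j) = m + natAct τ j := fun j hj => by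
    rw [natAct_directSum _ _ (by omega), if_neg (by omega), Nat.add_sub_cancel_left]
  have hjoin : ¬ natAct (directSum σ τ) (m - 1 + 1) < natAct (directSum σ τ) (m - 1) := by
    have := hτ 0 hk
    rw [add_zero] at this
    rw [Nat.sub_add_cancel hm, this, hσ _ (by omega)]
    have := natAct_lt σ (show m - 1 < m by omega)
    omega
  rw [if_neg hjoin, add_zero]
  congr 1
  · refine sum_congr rfl fun i hi => ?_
    simp only [mem_range] at hi
    rw [hσ i (by omega), hσ (i + 1) (by omega)]
  · refine sum_congr rfl fun j hj => ?_
    simp only [mem_range] at hj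
    rw [Nat.sub_add_cancel hm, add_assoc, hτ _ (by omega), hτ _ (by omega)]
    simp

lemma des_add_des_revPerm_mul (π : Perm (Fin n)) : des π + des (Fin.revPerm * π) = n - 1 := by
  rw [des_eq_sum π, des_eq_sum (Fin.revPerm * π), ← sum_add_distrib]
  refine (sum_congr rfl fun i hi => ?_).trans (card_eq_sum_ones _).symm |>.trans (card_range _)
  simp only [mem_range] at hi
  rw [natAct_revPerm_mul _ (by omega), natAct_revPerm_mul _ (by omega)]
  have hne := (natAct_inj π (i := i + 1) (j := i) (by omega) (by omega)).not.mpr (by omega)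
  have := natAct_lt π (show i < n by omega)
  have := natAct_lt π (show i + 1 < n by omega)
  split_ifs <;> omega

@[simp] lemma revPerm_mul_revPerm_mul (π : Perm (Fin n)) :
    Fin.revPerm * (Fin.revPerm * π) = π := by
  ext i; simp

lemma revPerm_mul_directSum {m k : ℕ} (σ : Perm (Fin m)) (τ : Perm (Fin k)) :
    Fin.revPerm * directSum σ τ = skewSum (Fin.revPerm * σ) (Fin.revPerm * τ) := by
  refine natAct_ext fun i hi => ?_
  rw [natAct_revPerm_mul _ hi, natAct_directSum _ _ hi, natAct_skewSum _ _ hi]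
  split_ifs with h
  · rw [natAct_revPerm_mul _ h]
    have := natAct_lt σ h
    omega
  · rw [natAct_revPerm_mul _ (by omega : i - m < k)]
    have := natAct_lt τ (by omega : i - m < k)
    omega

lemma revPerm_mul_skewSum {m k : ℕ} (σ : Perm (Fin m)) (τ : Perm (Fin k)) :
    Fin.revPerm * skewSum σ τ = directSum (Fin.revPerm * σ) (Fin.revPerm * τ) := by
  have := revPerm_mul_directSum (Fin.revPerm * σ) (Fin.revPerm * τ)
  rw [revPerm_mul_revPerm_mul, revPerm_mul_revPerm_mul] at this
  rw [← this, revPerm_mul_revPerm_mul]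

lemma des_revPerm_mul_directSum {m k : ℕ} (σ : Perm (Fin m)) (τ : Perm (Fin k)) (hm : 0 < m)
    (hk : 0 < k) :
    des (Fin.revPerm * directSum σ τ) = des (Fin.revPerm * σ) + des (Fin.revPerm * τ) + 1 := by
  have := des_add_des_revPerm_mul (directSum σ τ)
  have := des_add_des_revPerm_mul σ
  have := des_add_des_revPerm_mul τ
  rw [des_directSum σ τ hm hk] at *
  omega

end Descents

section Splitting

variable {n : ℕ}

def IsSplit (m : ℕ) (π : Perm (Fin n)) : Prop :=
  ∀ i < n, (natAct π i < m ↔ i < m)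

def PlusDecomposable (π : Perm (Fin n)) : Prop :=
  ∃ m, 0 < m ∧ m < n ∧ IsSplit m π

/-- `π` is a skew sum exactly when its complement `i ↦ n - 1 - π i` is a direct sum. -/
def MinusDecomposable (π : Perm (Fin n)) : Prop :=
  PlusDecomposable (Fin.revPerm * π)

lemma SeparablePerm.pos {π : Perm (Fin n)} (h : SeparablePerm π) : 0 < n := by
  induction h <;> omega

lemma SeparablePerm.revPerm_mul {π : Perm (Fin n)} (h : SeparablePerm π) :
    SeparablePerm (Fin.revPerm * π) := by
  induction h with
  | one => rw [Subsingleton.elim (Fin.revPerm * 1) 1]; exact .one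
  | dsum _ _ ih₁ ih₂ => rw [revPerm_mul_directSum]; exact .ssum ih₁ ih₂
  | ssum _ _ ih₁ ih₂ => rw [revPerm_mul_skewSum]; exact .dsum ih₁ ih₂

lemma separablePerm_revPerm_mul_iff {π : Perm (Fin n)} :
    SeparablePerm (Fin.revPerm * π) ↔ SeparablePerm π :=
  ⟨fun h => by simpa using h.revPerm_mul, SeparablePerm.revPerm_mul⟩

lemma isSplit_castPerm {a b m : ℕ} (h : a = b) (π : Perm (Fin a)) :
    IsSplit m (castPerm h π) ↔ IsSplit m π := by
  subst h; simp

lemma isSplit_directSum {m k : ℕ} (σ : Perm (Fin m)) (τ : Perm (Fin k)) :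
    IsSplit m (directSum σ τ) := by
  intro i hi
  rw [natAct_directSum _ _ hi]
  split_ifs with h
  · simpa [h] using natAct_lt σ h
  · simp [h]

lemma isSplit_directSum_add_iff {m k j : ℕ} (σ : Perm (Fin m)) (τ : Perm (Fin k)) :
    IsSplit (m + j) (directSum σ τ) ↔ IsSplit j τ := by
  constructor
  · intro hs l hl
    have := hs (m + l) (by omega)
    rw [natAct_directSum _ _ (by omega), if_neg (by omega), Nat.add_sub_cancel_left] at this
    omega
  · intro hs i hi
    rw [natAct_directSum _ _ hi]
    split_ifs with h
    · have := natAct_lt σ h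
      omega
    · have := hs (i - m) (by omega)
      omega

lemma IsSplit.of_directSum {m k j : ℕ} {σ : Perm (Fin m)} {τ : Perm (Fin k)}
    (hs : IsSplit j (directSum σ τ)) : IsSplit j σ := fun i hi => by
  simpa [natAct_directSum _ _ (by omega : i < m + k), hi] using hs i (by omega)

lemma not_isSplit_skewSum {m₁ k₁ m : ℕ} (σ : Perm (Fin m₁)) (τ : Perm (Fin k₁)) (hm₁ : 0 < m₁)
    (hk₁ : 0 < k₁) (hm : 0 < m) (hmn : m < m₁ + k₁) : ¬ IsSplit m (skewSum σ τ) := by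
  intro hs
  -- position `0` carries a value `≥ k₁`, position `m₁` a value `< k₁`, and some position
  -- `< m₁` the top value `m₁ + k₁ - 1`
  have h₀ := (hs 0 (by omega)).mpr hm
  rw [natAct_skewSum _ _ (by omega), if_pos hm₁] at h₀
  have h₁ := (hs m₁ (by omega)).mp (by
    rw [natAct_skewSum _ _ (by omega), if_neg (lt_irrefl _), Nat.sub_self]
    have := natAct_lt τ hk₁
    omega)
  set i₀ : ℕ := (σ.symm ⟨m₁ - 1, by omega⟩ : ℕ)
  have hi₀ : i₀ < m₁ := Fin.is_lt _
  have htop : natAct (skewSum σ τ) i₀ = k₁ + (m₁ - 1) := by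
    rw [natAct_skewSum _ _ (by omega), if_pos hi₀, natAct_of_lt _ hi₀]
    simp [i₀]
  have := (hs i₀ (by omega)).mpr (by omega)
  omega

lemma SeparablePerm.exists_eq_directSum {π : Perm (Fin n)} (hπ : SeparablePerm π) {m : ℕ}
    (hm : 0 < m) (hmn : m < n) (hs : IsSplit m π) :
    ∃ (k : ℕ) (h : m + k = n) (σ : Perm (Fin m)) (τ : Perm (Fin k)),
      SeparablePerm σ ∧ SeparablePerm τ ∧ π = castPerm h (directSum σ τ) := by
  induction hπ generalizing m with
  | one => omega
  | @dsum m₁ k₁ π₁ π₂ h₁ h₂ ih₁ ih₂ =>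
    rcases lt_trichotomy m m₁ with hlt | rfl | hgt
    · obtain ⟨k, hk, σ, τ, hσ, hτ, rfl⟩ := ih₁ hm hlt hs.of_directSum
      refine ⟨k + k₁, by omega, σ, directSum τ π₂, hσ, hτ.dsum h₂, ?_⟩
      rw [directSum_castPerm_left, directSum_assoc, castPerm_castPerm]
    · exact ⟨k₁, rfl, π₁, π₂, h₁, h₂, (castPerm_rfl _).symm⟩
    · obtain ⟨j, rfl⟩ := Nat.exists_eq_add_of_le hgt.le
      obtain ⟨k, hk, σ, τ, hσ, hτ, rfl⟩ :=
        ih₂ (by omega) (by omega) ((isSplit_directSum_add_iff π₁ π₂).mp hs)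
      refine ⟨k, by omega, castPerm (by omega) (directSum π₁ σ), τ,
        separablePerm_castPerm _ (h₁.dsum hσ), hτ, ?_⟩
      rw [directSum_castPerm_right, directSum_castPerm_left, directSum_assoc, castPerm_castPerm,
        castPerm_castPerm]
  | @ssum m₁ k₁ π₁ π₂ h₁ h₂ => exact absurd hs (not_isSplit_skewSum π₁ π₂ h₁.pos h₂.pos hm hmn)

lemma SeparablePerm.plusDecomposable_iff {π : Perm (Fin n)} (hπ : SeparablePerm π) (hn : 2 ≤ n) :
    PlusDecomposable π ↔ ¬ MinusDecomposable π := by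
  constructor
  · rintro ⟨m, hm, hmn, hs⟩ ⟨m', hm', hmn', hs'⟩
    obtain ⟨k, rfl, σ, τ, hσ, hτ, rfl⟩ := hπ.exists_eq_directSum hm hmn hs
    rw [castPerm_rfl, revPerm_mul_directSum] at hs'
    exact not_isSplit_skewSum _ _ hσ.pos hτ.pos hm' hmn' hs'
  · cases hπ with
    | one => omega
    | @dsum m k σ τ hσ hτ =>
      exact fun _ => ⟨m, hσ.pos, by have := hτ.pos; omega, isSplit_directSum σ τ⟩
    | @ssum m k σ τ hσ hτ =>
      refine fun h => absurd ⟨m, hσ.pos, by have := hτ.pos; omega, ?_⟩ h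
      rw [revPerm_mul_skewSum]
      exact isSplit_directSum _ _

end Splitting

section Counting

open scoped Classical

variable {n : ℕ}

noncomputable def lastSplit (π : Perm (Fin n)) : ℕ :=
  Nat.findGreatest (fun m => 0 < m ∧ IsSplit m π) (n - 1)

lemma lastSplit_castPerm_directSum {m k : ℕ} (h : m + k = n) (σ : Perm (Fin m))
    (τ : Perm (Fin k)) (hm : 0 < m) (hk : 0 < k) (hτ : ¬ PlusDecomposable τ) :
    lastSplit (castPerm h (directSum σ τ)) = m := by
  rw [lastSplit, Nat.findGreatest_eq_iff]
  refine ⟨by omega, fun _ => ⟨hm, (isSplit_castPerm _ _).mpr (isSplit_directSum σ τ)⟩, ?_⟩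
  rintro l hml hln ⟨-, hl⟩
  obtain ⟨j, rfl⟩ := Nat.exists_eq_add_of_le hml.le
  rw [isSplit_castPerm, isSplit_directSum_add_iff] at hl
  exact hτ ⟨j, by omega, by omega, hl⟩

lemma SeparablePerm.exists_eq_directSum_of_lastSplit {π : Perm (Fin n)} (hπ : SeparablePerm π)
    (hd : PlusDecomposable π) {m k : ℕ} (h : m + k = n) (hm : lastSplit π = m) :
    ∃ (σ : Perm (Fin m)) (τ : Perm (Fin k)), SeparablePerm σ ∧ SeparablePerm τ ∧
      ¬ PlusDecomposable τ ∧ π = castPerm h (directSum σ τ) := by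
  obtain ⟨m₀, hm₀, hm₀n, hs₀⟩ := hd
  have hspec : 0 < lastSplit π ∧ IsSplit (lastSplit π) π :=
    Nat.findGreatest_spec (P := fun m => 0 < m ∧ IsSplit m π) (by omega : m₀ ≤ n - 1) ⟨hm₀, hs₀⟩
  have hle : lastSplit π ≤ n - 1 := Nat.findGreatest_le _
  rw [hm] at hspec hle
  obtain ⟨k', h', σ, τ, hσ, hτ, rfl⟩ := hπ.exists_eq_directSum hspec.1 (by omega) hspec.2
  obtain rfl : k' = k := by omega
  refine ⟨σ, τ, hσ, hτ, fun ⟨j, hj, hjk, hsj⟩ => ?_, rfl⟩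
  refine Nat.findGreatest_is_greatest (P := fun m => 0 < m ∧ IsSplit m _) (k := m + j)
    (hm.trans_lt (by omega)) (by omega) ⟨by omega, ?_⟩
  rwa [isSplit_castPerm, isSplit_directSum_add_iff]

theorem sum_separable_plusDecomposable {R : Type*} [AddCommMonoid R]
    (F : ∀ {n : ℕ}, Perm (Fin n) → R) (n : ℕ) :
    ∑ π ∈ univ.filter (fun π : Perm (Fin n) => SeparablePerm π ∧ PlusDecomposable π), F π =
      ∑ m ∈ Ico 1 n, ∑ σ ∈ univ.filter (fun σ : Perm (Fin m) => SeparablePerm σ),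
        ∑ τ ∈ univ.filter (fun τ : Perm (Fin (n - m)) => SeparablePerm τ ∧ ¬ PlusDecomposable τ),
          F (directSum σ τ) := by
  rw [← sum_fiberwise_of_maps_to (g := lastSplit) (t := Ico 1 n)]
  · refine sum_congr rfl fun m hm => ?_
    have hmn : m + (n - m) = n := by have := mem_Ico.mp hm; omega
    rw [← sum_product']
    symm
    refine sum_nbij (fun p => castPerm hmn (directSum p.1 p.2)) ?_ ?_ ?_
      fun p _ => (apply_castPerm F hmn _).symm
    · rintro ⟨σ, τ⟩ hp
      simp only [mem_product, mem_filter, mem_univ, true_and] at hp ⊢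
      refine ⟨⟨separablePerm_castPerm _ (hp.1.dsum hp.2.1), m, hp.1.pos, (mem_Ico.mp hm).2,
        (isSplit_castPerm _ _).mpr (isSplit_directSum _ _)⟩, ?_⟩
      exact lastSplit_castPerm_directSum hmn σ τ hp.1.pos hp.2.1.pos hp.2.2
    · rintro ⟨σ, τ⟩ - ⟨σ', τ'⟩ - h
      obtain ⟨rfl, rfl⟩ := directSum_injective (castPerm_injective hmn h)
      rfl
    · rintro π hπ
      simp only [coe_filter, mem_filter, mem_univ, true_and, Set.mem_ofPred_eq] at hπ
      obtain ⟨σ, τ, hσ, hτ, hτd, rfl⟩ :=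
        hπ.1.1.exists_eq_directSum_of_lastSplit hπ.1.2 hmn hπ.2
      exact ⟨(σ, τ), by simp [hσ, hτ, hτd], rfl⟩
  · rintro π hπ
    simp only [mem_filter, mem_univ, true_and] at hπ
    obtain ⟨-, m, hm, hmn, hs⟩ := hπ
    have := Nat.le_findGreatest (P := fun m => 0 < m ∧ IsSplit m π) (by omega : m ≤ n - 1) ⟨hm, hs⟩
    have := Nat.findGreatest_le (P := fun m => 0 < m ∧ IsSplit m π) (n - 1)
    simp only [mem_Ico, lastSplit]
    omega

lemma sum_filter_eq_sum_filter_revPerm_mul {R : Type*} [AddCommMonoid R] (p : Perm (Fin n) → Prop)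
    [DecidablePred p] (f : Perm (Fin n) → R) :
    ∑ π ∈ univ.filter p, f π =
      ∑ π ∈ univ.filter (fun π => p (Fin.revPerm * π)), f (Fin.revPerm * π) := by
  rw [sum_filter, sum_filter]
  exact (Fintype.sum_equiv (Equiv.mulLeft Fin.revPerm) _ _ fun π => rfl).symm

end Counting

section DescentPolynomials

open Polynomial
open scoped Classical

noncomputable def separableDesPoly (n : ℕ) : ℤ[X] :=
  ∑ π ∈ univ.filter (fun π : Perm (Fin n) => SeparablePerm π), X ^ des π

noncomputable def plusIndecDesPoly (n : ℕ) : ℤ[X] :=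
  ∑ π ∈ univ.filter (fun π : Perm (Fin n) => SeparablePerm π ∧ ¬ PlusDecomposable π), X ^ des π

noncomputable def minusIndecDesPoly (n : ℕ) : ℤ[X] :=
  ∑ π ∈ univ.filter (fun π : Perm (Fin n) => SeparablePerm π ∧ ¬ MinusDecomposable π), X ^ des π

lemma sum_filter_perm_fin_one {R : Type*} [AddCommMonoid R] (p : Perm (Fin 1) → Prop)
    [DecidablePred p] (hp : p 1) (f : Perm (Fin 1) → R) : ∑ π ∈ univ.filter p, f π = f 1 := by
  rw [show univ.filter p = {1} from eq_singleton_iff_unique_mem.mpr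
    ⟨mem_filter.mpr ⟨mem_univ _, hp⟩, fun π _ => Subsingleton.elim π 1⟩, sum_singleton]

lemma des_one_fin_one : des (1 : Perm (Fin 1)) = 0 := by
  simp [des_eq_sum]

lemma not_plusDecomposable_fin_one (π : Perm (Fin 1)) : ¬ PlusDecomposable π := by
  rintro ⟨m, hm, hm1, -⟩
  omega

lemma separableDesPoly_one : separableDesPoly 1 = 1 := by
  rw [separableDesPoly, sum_filter_perm_fin_one _ .one, des_one_fin_one, pow_zero]

lemma plusIndecDesPoly_one : plusIndecDesPoly 1 = 1 := by
  rw [plusIndecDesPoly, sum_filter_perm_fin_one _ ⟨.one, not_plusDecomposable_fin_one _⟩,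
    des_one_fin_one, pow_zero]

lemma minusIndecDesPoly_one : minusIndecDesPoly 1 = 1 := by
  rw [minusIndecDesPoly, sum_filter_perm_fin_one _ ⟨.one, not_plusDecomposable_fin_one _⟩,
    des_one_fin_one, pow_zero]

variable {n : ℕ}

lemma separableDesPoly_eq_add (hn : 2 ≤ n) :
    separableDesPoly n = minusIndecDesPoly n + plusIndecDesPoly n := by
  rw [separableDesPoly, ← sum_filter_add_sum_filter_not _ PlusDecomposable, filter_filter,
    filter_filter, minusIndecDesPoly, plusIndecDesPoly]
  congr 2
  exact filter_congr fun π _ => and_congr_right fun hπ => hπ.plusDecomposable_iff hn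

lemma minusIndecDesPoly_eq (hn : 2 ≤ n) :
    minusIndecDesPoly n = ∑ m ∈ Ico 1 n, separableDesPoly m * plusIndecDesPoly (n - m) := by
  rw [minusIndecDesPoly, filter_congr fun π _ => and_congr_right fun hπ =>
      (hπ.plusDecomposable_iff hn).symm, sum_separable_plusDecomposable (X ^ des ·)]
  refine sum_congr rfl fun m hm => ?_
  rw [separableDesPoly, plusIndecDesPoly, sum_mul_sum]
  refine sum_congr rfl fun σ hσ => sum_congr rfl fun τ hτ => ?_
  simp only [mem_filter] at hσ hτ
  rw [des_directSum σ τ hσ.2.pos hτ.2.1.pos, pow_add]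

lemma plusIndecDesPoly_eq (hn : 2 ≤ n) :
    plusIndecDesPoly n = X * ∑ m ∈ Ico 1 n, separableDesPoly m * minusIndecDesPoly (n - m) := by
  have hsep (m : ℕ) : separableDesPoly m =
      ∑ σ ∈ univ.filter (fun σ : Perm (Fin m) => SeparablePerm σ), X ^ des (Fin.revPerm * σ) := by
    rw [separableDesPoly, sum_filter_eq_sum_filter_revPerm_mul]
    simp only [separablePerm_revPerm_mul_iff]
  have hminus (k : ℕ) : minusIndecDesPoly k = ∑ τ ∈ univ.filter (fun τ : Perm (Fin k) =>
      SeparablePerm τ ∧ ¬ PlusDecomposable τ), X ^ des (Fin.revPerm * τ) := by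
    rw [minusIndecDesPoly, sum_filter_eq_sum_filter_revPerm_mul]
    simp only [MinusDecomposable, separablePerm_revPerm_mul_iff, revPerm_mul_revPerm_mul]
  rw [plusIndecDesPoly, filter_congr fun π _ => and_congr_right fun hπ =>
      (not_congr (hπ.plusDecomposable_iff hn)).trans not_not,
    sum_filter_eq_sum_filter_revPerm_mul,
    filter_congr (q := fun π => SeparablePerm π ∧ PlusDecomposable π) fun π _ => by
      rw [MinusDecomposable, separablePerm_revPerm_mul_iff, revPerm_mul_revPerm_mul]]
  convert sum_separable_plusDecomposable (fun π => X ^ des (Fin.revPerm * π)) n using 1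
  rw [mul_sum]
  refine sum_congr rfl fun m hm => ?_
  rw [hsep, hminus, sum_mul_sum, mul_sum]
  refine sum_congr rfl fun σ hσ => ?_
  rw [mul_sum]
  refine sum_congr rfl fun τ hτ => ?_
  simp only [mem_filter] at hσ hτ
  rw [des_revPerm_mul_directSum σ τ hσ.2.pos hτ.2.1.pos, pow_succ, pow_add]
  ring

end DescentPolynomials

section GammaPositivity

open Polynomial

/-- The gamma-positive polynomials with centre of symmetry `N / 2`. -/
noncomputable def gammaCone (N : ℕ) : Submodule ℕ ℤ[X] :=
  Submodule.span ℕ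
    (Set.range fun k : Fin (N / 2 + 1) => (X : ℤ[X]) ^ (k : ℕ) * (1 + X) ^ (N - 2 * k))

variable {N K : ℕ} {p q : ℤ[X]}

lemma X_pow_mul_mem_gammaCone {k : ℕ} (hk : 2 * k ≤ N) :
    (X : ℤ[X]) ^ k * (1 + X) ^ (N - 2 * k) ∈ gammaCone N :=
  Submodule.subset_span ⟨⟨k, by omega⟩, rfl⟩

lemma mem_gammaCone_iff : p ∈ gammaCone N ↔
    ∃ γ : ℕ → ℕ, p = ∑ k ∈ range (N / 2 + 1), (γ k : ℤ[X]) * X ^ k * (1 + X) ^ (N - 2 * k) := by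
  rw [gammaCone, Submodule.mem_span_range_iff_exists_fun]
  constructor
  · rintro ⟨c, rfl⟩
    refine ⟨fun k => if h : k < N / 2 + 1 then c ⟨k, h⟩ else 0, ?_⟩
    rw [← Fin.sum_univ_eq_sum_range]
    simp [nsmul_eq_mul, mul_assoc, Fin.is_le]
  · rintro ⟨γ, rfl⟩
    refine ⟨fun k => γ k, ?_⟩
    rw [← Fin.sum_univ_eq_sum_range (fun k => (γ k : ℤ[X]) * X ^ k * (1 + X) ^ (N - 2 * k))]
    simp [nsmul_eq_mul, mul_assoc]

lemma mul_mem_gammaCone (hp : p ∈ gammaCone N) (hq : q ∈ gammaCone K) :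
    p * q ∈ gammaCone (N + K) := by
  refine Submodule.mul_le.mp ?_ p hp q hq
  rw [gammaCone, gammaCone, Submodule.span_mul_span, Submodule.span_le, Set.mul_subset_iff]
  rintro _ ⟨i, rfl⟩ _ ⟨j, rfl⟩
  have := i.is_lt
  have := j.is_lt
  have hprod : (X : ℤ[X]) ^ (i : ℕ) * (1 + X) ^ (N - 2 * i) *
      (X ^ (j : ℕ) * (1 + X) ^ (K - 2 * j)) =
      X ^ (i + j : ℕ) * (1 + X) ^ (N + K - 2 * (i + j)) := by
    rw [show N + K - 2 * (i + j) = (N - 2 * i) + (K - 2 * j) by omega]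
    ring
  rw [SetLike.mem_coe, hprod]
  exact X_pow_mul_mem_gammaCone (by omega)

lemma one_mem_gammaCone_zero : (1 : ℤ[X]) ∈ gammaCone 0 := by
  simpa using X_pow_mul_mem_gammaCone (N := 0) (k := 0) le_rfl

lemma X_mul_mem_gammaCone (hp : p ∈ gammaCone N) : X * p ∈ gammaCone (N + 2) := by
  rw [add_comm]
  exact mul_mem_gammaCone (by simpa using X_pow_mul_mem_gammaCone (N := 2) (k := 1) le_rfl) hp

lemma one_add_X_mul_mem_gammaCone (hp : p ∈ gammaCone N) : (1 + X) * p ∈ gammaCone (N + 1) := by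
  rw [add_comm]
  exact mul_mem_gammaCone (by simpa using X_pow_mul_mem_gammaCone (N := 1) (k := 0) zero_le_one) hp

/-- For `n ≥ 2` the conditions on `b` amount to `b ∈ gammaCone (n - 2)`; they are phrased through
`X * b` and `(1 + X) * b` so as to cover `n = 1` too, where `b = 0`. -/
def IsGammaSplit (n : ℕ) (M P : ℤ[X]) : Prop :=
  ∃ a b, a ∈ gammaCone (n - 1) ∧ X * b ∈ gammaCone n ∧ (1 + X) * b ∈ gammaCone (n - 1) ∧
    M = a + b ∧ P = a + X * b

variable {n : ℕ} {A M P : ℤ[X]}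

lemma isGammaSplit_one_one : IsGammaSplit 1 1 1 :=
  ⟨1, 0, one_mem_gammaCone_zero, by simp [zero_mem], by simp [zero_mem], by simp, by simp⟩

lemma IsGammaSplit.add_mem_gammaCone (h : IsGammaSplit n M P) : M + P ∈ gammaCone (n - 1) := by
  obtain ⟨a, b, ha, -, hb, rfl, rfl⟩ := h
  rw [show a + b + (a + X * b) = a + a + (1 + X) * b by ring]
  exact add_mem (add_mem ha ha) hb

lemma IsGammaSplit.sum {ι : Type*} (s : Finset ι) (M P : ι → ℤ[X])
    (h : ∀ i ∈ s, IsGammaSplit n (M i) (P i)) : IsGammaSplit n (∑ i ∈ s, M i) (∑ i ∈ s, P i) := by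
  induction s using Finset.cons_induction with
  | empty => exact ⟨0, 0, zero_mem _, by simp [zero_mem], by simp [zero_mem], by simp, by simp⟩
  | cons i s hi ih =>
    rw [sum_cons, sum_cons]
    obtain ⟨a, b, ha, hXb, hb, hM, hP⟩ := h i (mem_cons_self i s)
    obtain ⟨a', b', ha', hXb', hb', hM', hP'⟩ := ih fun j hj => h j (mem_cons_of_mem hj)
    refine ⟨a + a', b + b', add_mem ha ha', ?_, ?_, by rw [hM, hM']; ring, by rw [hP, hP']; ring⟩
    · rw [mul_add]; exact add_mem hXb hXb'
    · rw [mul_add]; exact add_mem hb hb'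

lemma IsGammaSplit.mul_left {m j : ℕ} (hA : A ∈ gammaCone (m - 1)) (h : IsGammaSplit j M P)
    (hm : 1 ≤ m) (hj : 1 ≤ j) : IsGammaSplit (m + j) (A * P) (X * (A * M)) := by
  obtain ⟨a, b, ha, hXb, hb, rfl, rfl⟩ := h
  refine ⟨A * (X * b), A * a, ?_, ?_, ?_, by ring, by ring⟩
  · have := mul_mem_gammaCone hA hXb
    rwa [show m - 1 + j = m + j - 1 by omega] at this
  · have := mul_mem_gammaCone hA (X_mul_mem_gammaCone ha)
    rwa [mul_left_comm, show m - 1 + (j - 1 + 2) = m + j by omega] at this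
  · have := mul_mem_gammaCone hA (one_add_X_mul_mem_gammaCone ha)
    rwa [mul_left_comm, show m - 1 + (j - 1 + 1) = m + j - 1 by omega] at this

end GammaPositivity

section MainTheorem

open Polynomial

lemma separableDesPoly_mem_gammaCone {n : ℕ} (hn : 1 ≤ n)
    (h : IsGammaSplit n (minusIndecDesPoly n) (plusIndecDesPoly n)) :
    separableDesPoly n ∈ gammaCone (n - 1) := by
  obtain rfl | hn := hn.eq_or_lt
  · rw [separableDesPoly_one]
    exact one_mem_gammaCone_zero
  · rw [separableDesPoly_eq_add hn]
    exact h.add_mem_gammaCone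

theorem isGammaSplit_indecDesPoly {n : ℕ} (hn : 1 ≤ n) :
    IsGammaSplit n (minusIndecDesPoly n) (plusIndecDesPoly n) := by
  induction n using Nat.strong_induction_on with
  | _ n ih =>
  obtain rfl | hn := hn.eq_or_lt
  · rw [minusIndecDesPoly_one, plusIndecDesPoly_one]
    exact isGammaSplit_one_one
  rw [minusIndecDesPoly_eq hn, plusIndecDesPoly_eq hn, mul_sum]
  refine IsGammaSplit.sum _ _ _ fun m hm => ?_
  obtain ⟨hm, hmn⟩ := mem_Ico.mp hm
  have hsep := separableDesPoly_mem_gammaCone hm (ih m hmn hm)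
  have := IsGammaSplit.mul_left hsep (ih (n - m) (by omega) (by omega)) hm (by omega)
  rwa [Nat.add_sub_cancel' hmn.le] at this

end MainTheorem

open Polynomial in
open scoped Classical in
/-- Fu–Lin–Zeng: the descent polynomial of the separable permutations of length `n`
is gamma-positive. -/
theorem stmt9 (n : ℕ) (hn : 1 ≤ n) :
    ∃ γ : ℕ → ℕ,
      (∑ π ∈ Finset.univ.filter (fun π : Equiv.Perm (Fin n) => SeparablePerm π),
        (X : Polynomial ℤ) ^ des π) =
      ∑ k ∈ Finset.range ((n - 1) / 2 + 1),
        (γ k : Polynomial ℤ) * X ^ k * (1 + X) ^ (n - 1 - 2 * k) :=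
  mem_gammaCone_iff.mp (separableDesPoly_mem_gammaCone hn (isGammaSplit_indecDesPoly hn))
end
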